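/- arXiv:1202.3493 — 6 statements merged into one kernel-verified Lean document; each statement's English description precedes it below -/
import Mathlib

section
/- The 5-dimensional Lebesgue volume of the polytope P_C = {x ∈ ℝ^5 : x_i ≥ 0 for all i, x1+x2+x3+x4+x5 ≤ 1, 2(x1+x2+x5) ≥ 1, 2(x1+x2+x3) ≥ 1} equals 1/384. -/
open MeasureTheory Set Function
open scoped ENNReal Nat

/-!
Integrate the coordinates out one at a time, from `x 4` down to `x 0`. With `s = x 0 + x 1`
fixed, the two majority conditions say exactly that `x 2` and `x 4` are both at least
`d = max (1/2 - s) 0`; after translating these two coordinates by `d`, the fibre over `(x 0, x 1)`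
is the standard simplex of size `1 - s - 2d = min s (1 - s)` in `(x 2, x 3, x 4)`, and each of
the three inner integrations is `∫_{t ≥ a} (c - t)₊ⁿ / n! dt = (c - a)₊ⁿ⁺¹ / (n+1)!`. The
remaining integral of `min s (1 - s)₊³ / 6` over `x 0, x 1 ≥ 0` is computed by splitting at
the kink `s = 1/2`.
-/

theorem lintegral_Ico_ofReal_eq_intervalIntegral {g : ℝ → ℝ} {a b : ℝ} (hab : a ≤ b)
    (hg : ContinuousOn g (Icc a b)) (hg₀ : ∀ t ∈ Icc a b, 0 ≤ g t) :
    ∫⁻ t in Ico a b, ENNReal.ofReal (g t) = ENNReal.ofReal (∫ t in a..b, g t) := by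
  rw [Measure.restrict_congr_set Ico_ae_eq_Icc, ← ofReal_integral_eq_lintegral_ofReal
    (hg.integrableOn_Icc) ((ae_restrict_iff' measurableSet_Icc).2 (ae_of_all _ hg₀)),
    intervalIntegral.integral_of_le hab, integral_Icc_eq_integral_Ioc]

/-- `r ^ n / n!` is the volume of the simplex `{y ∈ ℝⁿ | 0 ≤ y, ∑ y ≤ r}`. -/
noncomputable def simplexVolume (n : ℕ) (r : ℝ) : ℝ≥0∞ :=
  if 0 ≤ r then ENNReal.ofReal (r ^ n / n !) else 0

@[fun_prop]
theorem measurable_simplexVolume (n : ℕ) : Measurable (simplexVolume n) :=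
  Measurable.ite measurableSet_Ici (by fun_prop) measurable_const

theorem lintegral_Ici_simplexVolume (n : ℕ) (a c : ℝ) :
    ∫⁻ t in Ici a, simplexVolume n (c - t) = simplexVolume (n + 1) (c - a) := by
  have hind : (fun t => simplexVolume n (c - t)) =
      (Iic c).indicator (fun t => ENNReal.ofReal ((c - t) ^ n / n !)) := by
    ext t; simp [simplexVolume, indicator_apply]
  rw [hind, setLIntegral_indicator measurableSet_Iic, inter_comm, Ici_inter_Iic]
  rcases le_or_gt a c with hac | hca
  · rw [← Measure.restrict_congr_set Ico_ae_eq_Icc, lintegral_Ico_ofReal_eq_intervalIntegral hac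
      (by fun_prop) (fun t ht => by have := ht.2; positivity),
      intervalIntegral.integral_div, intervalIntegral.integral_comp_sub_left (· ^ n)]
    simp [simplexVolume, hac, integral_pow, Nat.factorial_succ, div_div]
  · simp [simplexVolume, hca.not_ge]

namespace Condorcet

noncomputable def deficit (s : ℝ) : ℝ := max (1 / 2 - s) 0

theorem deficit_le_iff {s y : ℝ} : deficit s ≤ y ↔ 0 ≤ y ∧ 1 ≤ 2 * (s + y) := by
  rw [deficit, max_le_iff]; constructor <;> rintro ⟨h₁, h₂⟩ <;> constructor <;> linarith

theorem one_sub_sub_deficit_sub_deficit (s : ℝ) :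
    1 - s - deficit s - deficit s = min s (1 - s) := by
  rcases le_total s (1 / 2) with h | h
  · rw [deficit, max_eq_left (by linarith), min_eq_left (by linarith)]; ring
  · rw [deficit, max_eq_right (by linarith), min_eq_right (by linarith)]; ring

def winnerRegion : Set (Fin 5 → ℝ) :=
  {x | (∀ i, 0 ≤ x i) ∧ x 0 + x 1 + x 2 + x 3 + x 4 ≤ 1 ∧
    1 ≤ 2 * (x 0 + x 1 + x 4) ∧ 1 ≤ 2 * (x 0 + x 1 + x 2)}

/-- Closed form of `∫_{s ≥ u} simplexVolume 3 (min s (1 - s)) ds`. -/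
noncomputable def tailVolume (u : ℝ) : ℝ≥0∞ :=
  if u < 1 / 2 then ENNReal.ofReal ((1 / 8 - u ^ 4) / 24) else simplexVolume 4 (1 - u)

/- `marginalₖ x` is the integral of the indicator of `winnerRegion` over the coordinates
`k, …, 4`, the other coordinates being those of `x`. -/
noncomputable def marginal₄ (x : Fin 5 → ℝ) : ℝ≥0∞ :=
  if ((0 ≤ x 0 ∧ 0 ≤ x 1) ∧ deficit (x 0 + x 1) ≤ x 2) ∧ 0 ≤ x 3 then
    simplexVolume 1 (1 - (x 0 + x 1) - x 2 - x 3 - deficit (x 0 + x 1)) else 0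

noncomputable def marginal₃ (x : Fin 5 → ℝ) : ℝ≥0∞ :=
  if (0 ≤ x 0 ∧ 0 ≤ x 1) ∧ deficit (x 0 + x 1) ≤ x 2 then
    simplexVolume 2 (1 - (x 0 + x 1) - x 2 - deficit (x 0 + x 1)) else 0

noncomputable def marginal₂ (x : Fin 5 → ℝ) : ℝ≥0∞ :=
  if 0 ≤ x 0 ∧ 0 ≤ x 1 then simplexVolume 3 (min (x 0 + x 1) (1 - (x 0 + x 1))) else 0

noncomputable def marginal₁ (x : Fin 5 → ℝ) : ℝ≥0∞ :=
  if 0 ≤ x 0 then tailVolume (x 0) else 0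

@[fun_prop]
theorem measurable_deficit : Measurable deficit := by
  unfold deficit; fun_prop

theorem measurableSet_winnerRegion : MeasurableSet winnerRegion := by
  unfold winnerRegion; measurability

theorem measurable_marginal₄ : Measurable marginal₄ :=
  Measurable.ite (by measurability) (by fun_prop) measurable_const

theorem measurable_marginal₃ : Measurable marginal₃ :=
  Measurable.ite (by measurability) (by fun_prop) measurable_const

theorem measurable_marginal₂ : Measurable marginal₂ :=
  Measurable.ite (by measurability) (by fun_prop) measurable_const

@[fun_prop]
theorem measurable_tailVolume : Measurable tailVolume :=
  Measurable.ite measurableSet_Iio (by fun_prop) (by fun_prop)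

theorem measurable_marginal₁ : Measurable marginal₁ :=
  Measurable.ite (by measurability) (by fun_prop) measurable_const

theorem update_mem_winnerRegion_iff {x : Fin 5 → ℝ} {t : ℝ} :
    update x 4 t ∈ winnerRegion ↔
      (((0 ≤ x 0 ∧ 0 ≤ x 1) ∧ deficit (x 0 + x 1) ≤ x 2) ∧ 0 ≤ x 3) ∧
        deficit (x 0 + x 1) ≤ t ∧ 0 ≤ 1 - (x 0 + x 1) - x 2 - x 3 - t := by
  simp only [winnerRegion, mem_ofPred_eq, Fin.forall_fin_succ, Fin.isValue, Fin.succ_zero_eq_one,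
    Fin.succ_one_eq_two, Fin.reduceSucc, IsEmpty.forall_iff, and_true, ne_eq, Fin.reduceEq,
    not_false_eq_true, update_of_ne, update_self, deficit_le_iff, sub_nonneg]
  constructor
  · rintro ⟨⟨h₀, h₁, h₂, h₃, h₄⟩, hsum, hab, hac⟩
    exact ⟨⟨⟨⟨h₀, h₁⟩, h₂, hac⟩, h₃⟩, ⟨h₄, hab⟩, by linarith⟩
  · rintro ⟨⟨⟨⟨h₀, h₁⟩, h₂, hac⟩, h₃⟩, ⟨h₄, hab⟩, hsum⟩
    exact ⟨⟨h₀, h₁, h₂, h₃, h₄⟩, by linarith, hab, hac⟩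

theorem lintegral_indicator_winnerRegion_update (x : Fin 5 → ℝ) :
    ∫⁻ t, winnerRegion.indicator 1 (update x 4 t) = marginal₄ x := by
  by_cases hx : ((0 ≤ x 0 ∧ 0 ≤ x 1) ∧ deficit (x 0 + x 1) ≤ x 2) ∧ 0 ≤ x 3
  · calc ∫⁻ t, winnerRegion.indicator 1 (update x 4 t)
        = ∫⁻ t in Ici (deficit (x 0 + x 1)),
            simplexVolume 0 (1 - (x 0 + x 1) - x 2 - x 3 - t) := by
          rw [← lintegral_indicator measurableSet_Ici]
          congr with t
          classical
          simp [indicator_apply, update_mem_winnerRegion_iff, hx, simplexVolume, ite_and]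
      _ = marginal₄ x := by simp [lintegral_Ici_simplexVolume, marginal₄, hx]
  · simp [update_mem_winnerRegion_iff, hx, marginal₄]

theorem lintegral_marginal₄_update (x : Fin 5 → ℝ) :
    ∫⁻ t, marginal₄ (update x 3 t) = marginal₃ x := by
  by_cases hx : (0 ≤ x 0 ∧ 0 ≤ x 1) ∧ deficit (x 0 + x 1) ≤ x 2
  · calc ∫⁻ t, marginal₄ (update x 3 t)
        = ∫⁻ t in Ici 0, simplexVolume 1 (1 - (x 0 + x 1) - x 2 - deficit (x 0 + x 1) - t) := by
          rw [← lintegral_indicator measurableSet_Ici]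
          congr with t
          simp [marginal₄, hx, indicator_apply, sub_right_comm _ t]
      _ = marginal₃ x := by simp [lintegral_Ici_simplexVolume, marginal₃, hx]
  · simp [marginal₄, marginal₃, hx]

theorem lintegral_marginal₃_update (x : Fin 5 → ℝ) :
    ∫⁻ t, marginal₃ (update x 2 t) = marginal₂ x := by
  by_cases hx : 0 ≤ x 0 ∧ 0 ≤ x 1
  · calc ∫⁻ t, marginal₃ (update x 2 t)
        = ∫⁻ t in Ici (deficit (x 0 + x 1)),
            simplexVolume 2 (1 - (x 0 + x 1) - deficit (x 0 + x 1) - t) := by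
          rw [← lintegral_indicator measurableSet_Ici]
          congr with t
          simp [marginal₃, hx, indicator_apply, sub_right_comm _ t]
      _ = marginal₂ x := by
          simp [lintegral_Ici_simplexVolume, marginal₂, hx, one_sub_sub_deficit_sub_deficit]
  · simp [marginal₃, marginal₂, hx]

theorem lintegral_Ici_simplexVolume_min {u : ℝ} (hu : 0 ≤ u) :
    ∫⁻ t in Ici 0, simplexVolume 3 (min (u + t) (1 - (u + t))) = tailVolume u := by
  rcases lt_or_ge u (1 / 2) with hu' | hu'
  · have hrise : ∫⁻ t in Ico 0 (1 / 2 - u), simplexVolume 3 (min (u + t) (1 - (u + t))) =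
        ENNReal.ofReal (((1 / 2) ^ 4 - u ^ 4) / 24) := by
      rw [setLIntegral_congr_fun measurableSet_Ico
        (g := fun t => ENNReal.ofReal ((u + t) ^ 3 / 3 !))
        (fun t ht => by
          rw [min_eq_left (by linarith [ht.2]), simplexVolume, if_pos (by linarith [ht.1])]),
        lintegral_Ico_ofReal_eq_intervalIntegral (by linarith) (by fun_prop)
          (fun t ht => by have := ht.1; positivity),
        intervalIntegral.integral_div, intervalIntegral.integral_comp_add_left (· ^ 3)]
      rw [add_zero, add_sub_cancel, integral_pow]
      norm_num [Nat.factorial, div_div]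
    have hfall : ∫⁻ t in Ici (1 / 2 - u), simplexVolume 3 (min (u + t) (1 - (u + t))) =
        simplexVolume 4 (1 / 2) := by
      rw [setLIntegral_congr_fun measurableSet_Ici (g := fun t => simplexVolume 3 (1 - u - t))
        (fun t ht => by rw [min_eq_right (by linarith [ht.out]), sub_add_eq_sub_sub]),
        lintegral_Ici_simplexVolume]
      congr 1
      ring
    rw [← Ico_union_Ici_eq_Ici (by linarith : (0 : ℝ) ≤ 1 / 2 - u),
      lintegral_union measurableSet_Ici ((Iio_disjoint_Ici le_rfl).mono_left Ico_subset_Iio_self),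
      hrise, hfall, tailVolume, if_pos hu', simplexVolume, if_pos (by norm_num),
      ← ENNReal.ofReal_add (by nlinarith [pow_le_pow_left₀ hu hu'.le 4]) (by norm_num)]
    congr 1
    simp only [Nat.factorial]
    ring
  · rw [setLIntegral_congr_fun measurableSet_Ici (g := fun t => simplexVolume 3 (1 - u - t))
      (fun t ht => by rw [min_eq_right (by linarith [ht.out]), sub_add_eq_sub_sub]),
      lintegral_Ici_simplexVolume, tailVolume, if_neg hu'.not_gt, sub_zero]

theorem lintegral_marginal₂_update (x : Fin 5 → ℝ) :
    ∫⁻ t, marginal₂ (update x 1 t) = marginal₁ x := by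
  by_cases hx : 0 ≤ x 0
  · calc ∫⁻ t, marginal₂ (update x 1 t)
        = ∫⁻ t in Ici 0, simplexVolume 3 (min (x 0 + t) (1 - (x 0 + t))) := by
          rw [← lintegral_indicator measurableSet_Ici]
          congr with t
          simp [marginal₂, hx, indicator_apply]
      _ = marginal₁ x := by rw [lintegral_Ici_simplexVolume_min hx, marginal₁, if_pos hx]
  · simp [marginal₂, marginal₁, hx]

theorem lintegral_Ici_tailVolume : ∫⁻ u in Ici 0, tailVolume u = 1 / 384 := by
  have hlow : ∫⁻ u in Ico 0 (1 / 2), tailVolume u = ENNReal.ofReal (3 / 1280) := by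
    rw [setLIntegral_congr_fun measurableSet_Ico
      (g := fun u => ENNReal.ofReal ((1 / 8 - u ^ 4) / 24))
      (fun u hu => by rw [tailVolume, if_pos hu.2]),
      lintegral_Ico_ofReal_eq_intervalIntegral (by norm_num) (by fun_prop)
        (fun u hu => by nlinarith [pow_le_pow_left₀ hu.1 hu.2 4])]
    rw [intervalIntegral.integral_div, intervalIntegral.integral_sub intervalIntegrable_const
      (intervalIntegral.intervalIntegrable_pow _), integral_pow]
    norm_num
  have hhigh : ∫⁻ u in Ici (1 / 2), tailVolume u = simplexVolume 5 (1 / 2) := by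
    rw [setLIntegral_congr_fun measurableSet_Ici
      (g := fun u => simplexVolume 4 (1 - u))
      (fun u hu => by rw [tailVolume, if_neg (not_lt.2 hu)]),
      lintegral_Ici_simplexVolume]
    norm_num
  rw [← Ico_union_Ici_eq_Ici (by norm_num : (0 : ℝ) ≤ 1 / 2),
    lintegral_union measurableSet_Ici ((Iio_disjoint_Ici le_rfl).mono_left Ico_subset_Iio_self),
    hlow, hhigh, simplexVolume, if_pos (by norm_num),
    ← ENNReal.ofReal_add (by norm_num) (by norm_num)]
  norm_num [Nat.factorial, ENNReal.ofReal_div_of_pos]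

theorem lintegral_marginal₁_update (x : Fin 5 → ℝ) :
    ∫⁻ t, marginal₁ (update x 0 t) = 1 / 384 := by
  rw [← lintegral_Ici_tailVolume, ← lintegral_indicator measurableSet_Ici]
  congr with t

end Condorcet

open Condorcet in
/-- The 5-dimensional Lebesgue volume of the polytope
`P_C = {x ∈ ℝ^5 : xᵢ ≥ 0, x1+⋯+x5 ≤ 1, 2(x1+x2+x5) ≥ 1, 2(x1+x2+x3) ≥ 1}`
(the set of voting situations in which candidate `a` is the Condorcet winner)
equals `1/384`. -/
theorem volume_condorcet_winner_polytope :
    volume {x : Fin 5 → ℝ |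
      (∀ i, 0 ≤ x i) ∧ x 0 + x 1 + x 2 + x 3 + x 4 ≤ 1 ∧
      1 ≤ 2 * (x 0 + x 1 + x 4) ∧ 1 ≤ 2 * (x 0 + x 1 + x 2)} = 1 / 384 := by
  change volume winnerRegion = 1 / 384
  rw [← lintegral_indicator_one measurableSet_winnerRegion, volume_pi,
    lintegral_eq_lmarginal_univ (0 : Fin 5 → ℝ),
    show (Finset.univ : Finset (Fin 5)) = {4, 3, 2, 1, 0} by decide,
    lmarginal_insert' _ (measurable_one.indicator measurableSet_winnerRegion) (by decide),
    funext lintegral_indicator_winnerRegion_update,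
    lmarginal_insert' _ measurable_marginal₄ (by decide), funext lintegral_marginal₄_update,
    lmarginal_insert' _ measurable_marginal₃ (by decide), funext lintegral_marginal₃_update,
    lmarginal_insert' _ measurable_marginal₂ (by decide), funext lintegral_marginal₂_update,
    lmarginal_singleton]
  exact lintegral_marginal₁_update 0
end

section
/- The 5-dimensional Lebesgue volume of the set of x in the simplex S for which no candidate is a Condorcet winner, namely {x ∈ S : ¬(u > 1/2 ∧ v > 1/2) ∧ ¬(w > 1/2 ∧ u < 1/2) ∧ ¬(v < 1/2 ∧ w < 1/2)} where u = x1+x2+x5, v = x1+x2+x3, w = x1+x3+x4, equals 1/1920; equivalently, the limiting probability of Condorcet's paradox under IAC for 3 candidates is 1/16. -/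
/-!
Up to ties, which lie on hyperplanes and so are null, there is no Condorcet winner exactly
when the majority relation is one of the two cycles a ≻ b ≻ c ≻ a or a ≻ c ≻ b ≻ a. Each
cycle region is the preimage of the corner simplex `{y ≥ 0, ∑ y ≤ 1/2}` under a unimodular
affine change of variables, so each has volume `(1/2)^5 / 5! = 1/3840`, and the paradox has
volume `1/1920`.
-/

open MeasureTheory Matrix
open scoped ENNReal

def cornerSimplex (n : ℕ) (r : ℝ) : Set (Fin n → ℝ) :=
  {x | (∀ i, 0 ≤ x i) ∧ ∑ i, x i ≤ r}

theorem measurableSet_cornerSimplex (n : ℕ) (r : ℝ) : MeasurableSet (cornerSimplex n r) := by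
  unfold cornerSimplex
  measurability

theorem cornerSimplex_eq_empty {n : ℕ} {r : ℝ} (hr : r < 0) : cornerSimplex n r = ∅ :=
  Set.eq_empty_of_forall_notMem fun _ ⟨hx, hsum⟩ =>
    hr.not_ge <| (Finset.sum_nonneg fun i _ => hx i).trans hsum

theorem preimage_piFinSuccAbove_cornerSimplex (n : ℕ) (r : ℝ) :
    (MeasurableEquiv.piFinSuccAbove (fun _ : Fin (n + 1) => ℝ) 0).symm ⁻¹'
        cornerSimplex (n + 1) r
      = {p : ℝ × (Fin n → ℝ) | 0 ≤ p.1 ∧ p.2 ∈ cornerSimplex n (r - p.1)} := by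
  ext ⟨t, y⟩
  simp [cornerSimplex, MeasurableEquiv.piFinSuccAbove, Fin.forall_fin_succ, Fin.sum_univ_succ,
    le_sub_iff_add_le', and_assoc]

theorem lintegral_Icc_sub_pow_div_factorial (n : ℕ) {r : ℝ} (hr : 0 ≤ r) :
    ∫⁻ t in Set.Icc 0 r, ENNReal.ofReal ((r - t) ^ n / n.factorial)
      = ENNReal.ofReal (r ^ (n + 1) / (n + 1).factorial) := by
  rw [← ofReal_integral_eq_lintegral_ofReal, integral_Icc_eq_integral_Ioc,
    ← intervalIntegral.integral_of_le hr, intervalIntegral.integral_div,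
    intervalIntegral.integral_comp_sub_left (fun t => t ^ n) r, integral_pow, Nat.factorial_succ]
  · congr 1
    push_cast
    field_simp
    simp
  · exact (by fun_prop : Continuous fun t : ℝ => (r - t) ^ n / n.factorial).integrableOn_Icc
  · filter_upwards [ae_restrict_mem measurableSet_Icc] with t ht
    have : 0 ≤ r - t := sub_nonneg.2 ht.2
    positivity

theorem volume_cornerSimplex (n : ℕ) {r : ℝ} (hr : 0 ≤ r) :
    volume (cornerSimplex n r) = ENNReal.ofReal (r ^ n / n.factorial) := by
  induction n generalizing r with
  | zero =>
    have : cornerSimplex 0 r = Set.univ := by simp [cornerSimplex, hr]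
    rw [this, volume_pi, Measure.pi_univ]
    simp
  | succ n ih =>
    have hslice (t : ℝ) :
        volume (Prod.mk t ⁻¹' {p : ℝ × (Fin n → ℝ) | 0 ≤ p.1 ∧ p.2 ∈ cornerSimplex n (r - p.1)})
          = (Set.Icc 0 r).indicator (fun t => ENNReal.ofReal ((r - t) ^ n / n.factorial)) t := by
      rcases lt_or_ge t 0 with ht | ht
      · simp [ht.not_ge]
      rcases le_or_gt t r with htr | htr
      · simp [ht, htr, ih (sub_nonneg.2 htr)]
      · simp [ht, htr.not_ge, cornerSimplex_eq_empty (sub_neg.2 htr)]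
    have hmeas := (measurableSet_cornerSimplex (n + 1) r).preimage
      (MeasurableEquiv.piFinSuccAbove (fun _ : Fin (n + 1) => ℝ) 0).symm.measurable
    rw [← (volume_preserving_piFinSuccAbove (fun _ : Fin (n + 1) => ℝ) 0).symm.measure_preimage
      (measurableSet_cornerSimplex (n + 1) r).nullMeasurableSet]
    rw [preimage_piFinSuccAbove_cornerSimplex] at hmeas ⊢
    rw [Measure.volume_eq_prod, Measure.prod_apply hmeas]
    simp_rw [hslice]
    rw [lintegral_indicator measurableSet_Icc, lintegral_Icc_sub_pow_div_factorial n hr]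

theorem volume_preimage_mulVec_add {ι : Type*} [Fintype ι] [DecidableEq ι] (M : Matrix ι ι ℝ)
    (hM : M.det ≠ 0) (c : ι → ℝ) (s : Set (ι → ℝ)) :
    volume ((fun x => M *ᵥ x + c) ⁻¹' s) = ENNReal.ofReal |M.det|⁻¹ * volume s := by
  change volume (Matrix.toLin' M ⁻¹' ((· + c) ⁻¹' s)) = _
  rw [Measure.addHaar_preimage_linearMap volume (by rwa [LinearMap.det_toLin']),
    LinearMap.det_toLin', measure_preimage_add_right, abs_inv]

theorem volume_preimage_mulVec_add_of_abs_det_eq_one {ι : Type*} [Fintype ι] [DecidableEq ι]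
    {M : Matrix ι ι ℝ} (hM : |M.det| = 1) (c : ι → ℝ) (s : Set (ι → ℝ)) :
    volume ((fun x => M *ᵥ x + c) ⁻¹' s) = volume s := by
  rw [volume_preimage_mulVec_add M (abs_ne_zero.1 (hM.symm ▸ one_ne_zero)), hM]
  simp

theorem addHaar_linearMap_preimage_singleton {E : Type*} [NormedAddCommGroup E]
    [NormedSpace ℝ E] [MeasurableSpace E] [BorelSpace E] [FiniteDimensional ℝ E] (μ : Measure E)
    [μ.IsAddHaarMeasure] {f : E →ₗ[ℝ] ℝ} (hf : f ≠ 0) (c : ℝ) : μ (f ⁻¹' {c}) = 0 := by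
  obtain ⟨x₀, hx₀⟩ : ∃ x₀, f x₀ = c := ⟨_, (f.surjective_of_ne_zero hf c).choose_spec⟩
  have : f ⁻¹' {c} = (· + -x₀) ⁻¹' LinearMap.ker f := by
    ext x
    simp [← sub_eq_add_neg, sub_eq_zero, hx₀]
  rw [this, measure_preimage_add_right]
  exact Measure.addHaar_submodule μ _ (LinearMap.ker_eq_top.not.2 hf)

theorem volume_setOf_add_add_eq {ι : Type*} [Fintype ι] (i j k : ι) (c : ℝ) :
    volume {x : ι → ℝ | x i + x j + x k = c} = 0 := by
  let f : (ι → ℝ) →ₗ[ℝ] ℝ := .proj i + .proj j + .proj k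
  have hf : f ≠ 0 := fun h => by
    have := LinearMap.congr_fun h fun _ => 1
    norm_num [f] at this
  exact addHaar_linearMap_preimage_singleton volume hf c

-- `x 0, …, x 4` are the shares of the orders abc, acb, bac, bca, cab; cba gets the rest.
def shareAB (x : Fin 5 → ℝ) : ℝ := x 0 + x 1 + x 4

def shareAC (x : Fin 5 → ℝ) : ℝ := x 0 + x 1 + x 2

def shareBC (x : Fin 5 → ℝ) : ℝ := x 0 + x 2 + x 3

def condorcetParadox : Set (Fin 5 → ℝ) :=
  {x | (∀ i, 0 ≤ x i) ∧ x 0 + x 1 + x 2 + x 3 + x 4 ≤ 1 ∧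
    ¬(1 / 2 < shareAB x ∧ 1 / 2 < shareAC x) ∧
    ¬(1 / 2 < shareBC x ∧ shareAB x < 1 / 2) ∧
    ¬(shareAC x < 1 / 2 ∧ shareBC x < 1 / 2)}

def cycleABC : Set (Fin 5 → ℝ) :=
  {x | (∀ i, 0 ≤ x i) ∧ x 0 + x 1 + x 2 + x 3 + x 4 ≤ 1 ∧
    1 / 2 ≤ shareAB x ∧ 1 / 2 ≤ shareBC x ∧ shareAC x ≤ 1 / 2}

def cycleACB : Set (Fin 5 → ℝ) :=
  {x | (∀ i, 0 ≤ x i) ∧ x 0 + x 1 + x 2 + x 3 + x 4 ≤ 1 ∧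
    shareAB x ≤ 1 / 2 ∧ shareBC x ≤ 1 / 2 ∧ 1 / 2 ≤ shareAC x}

theorem forall_fin_five {p : Fin 5 → Prop} : (∀ i, p i) ↔ p 0 ∧ p 1 ∧ p 2 ∧ p 3 ∧ p 4 := by
  simp [Fin.forall_fin_succ]

-- New coordinates `x 1, x 2, shareAB x - 1/2, shareBC x - 1/2` and the share of cba; they sum to
-- `shareAC x`.
theorem cycleABC_eq_preimage :
    cycleABC = (fun x => !![0, 1, 0, 0, 0; 0, 0, 1, 0, 0; 1, 1, 0, 0, 1; 1, 0, 1, 1, 0;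
      -1, -1, -1, -1, -1] *ᵥ x + ![0, 0, -1 / 2, -1 / 2, 1]) ⁻¹' cornerSimplex 5 (1 / 2) := by
  ext x
  simp only [cycleABC, cornerSimplex, shareAB, shareAC, shareBC, Set.mem_ofPred_eq,
    Set.preimage_ofPred_eq, forall_fin_five, Fin.sum_univ_five, cons_mulVec, empty_mulVec,
    dotProduct, cons_val_zero, cons_val_one, cons_val, head_cons, tail_cons, add_cons,
    empty_add_empty, zero_mul, one_mul, neg_mul, zero_add, add_zero]
  constructor
  · rintro ⟨⟨h0, h1, h2, h3, h4⟩, hsum, hab, hbc, hac⟩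
    refine ⟨⟨?_, ?_, ?_, ?_, ?_⟩, ?_⟩ <;> linarith
  · rintro ⟨⟨h0, h1, h2, h3, h4⟩, hsum⟩
    refine ⟨⟨?_, ?_, ?_, ?_, ?_⟩, ?_, ?_, ?_, ?_⟩ <;> linarith

-- New coordinates `x 0, x 3, x 4, 1/2 - shareAB x, 1/2 - shareBC x`; they sum to `1 - shareAC x`.
theorem cycleACB_eq_preimage :
    cycleACB = (fun x => !![1, 0, 0, 0, 0; 0, 0, 0, 1, 0; 0, 0, 0, 0, 1; -1, -1, 0, 0, -1;
      -1, 0, -1, -1, 0] *ᵥ x + ![0, 0, 0, 1 / 2, 1 / 2]) ⁻¹' cornerSimplex 5 (1 / 2) := by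
  ext x
  simp only [cycleACB, cornerSimplex, shareAB, shareAC, shareBC, Set.mem_ofPred_eq,
    Set.preimage_ofPred_eq, forall_fin_five, Fin.sum_univ_five, cons_mulVec, empty_mulVec,
    dotProduct, cons_val_zero, cons_val_one, cons_val, head_cons, tail_cons, add_cons,
    empty_add_empty, zero_mul, one_mul, neg_mul, zero_add, add_zero]
  constructor
  · rintro ⟨⟨h0, h1, h2, h3, h4⟩, hsum, hab, hbc, hac⟩
    refine ⟨⟨?_, ?_, ?_, ?_, ?_⟩, ?_⟩ <;> linarith
  · rintro ⟨⟨h0, h1, h2, h3, h4⟩, hsum⟩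
    refine ⟨⟨?_, ?_, ?_, ?_, ?_⟩, ?_, ?_, ?_, ?_⟩ <;> linarith

theorem volume_cycleABC : volume cycleABC = volume (cornerSimplex 5 (1 / 2)) := by
  rw [cycleABC_eq_preimage, volume_preimage_mulVec_add_of_abs_det_eq_one]
  simp [Matrix.det_succ_row_zero, Fin.sum_univ_succ, Fin.succAbove]

theorem volume_cycleACB : volume cycleACB = volume (cornerSimplex 5 (1 / 2)) := by
  rw [cycleACB_eq_preimage, volume_preimage_mulVec_add_of_abs_det_eq_one]
  simp [Matrix.det_succ_row_zero, Fin.sum_univ_succ, Fin.succAbove]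

theorem measurableSet_cycleACB : MeasurableSet cycleACB :=
  cycleACB_eq_preimage ▸ (measurableSet_cornerSimplex 5 _).preimage (by fun_prop)

theorem cycleABC_union_cycleACB_subset : cycleABC ∪ cycleACB ⊆ condorcetParadox := by
  rintro x (⟨hpos, hsum, hab, hbc, hac⟩ | ⟨hpos, hsum, hab, hbc, hac⟩) <;>
    refine ⟨hpos, hsum, ?_, ?_, ?_⟩ <;> rintro ⟨h, h'⟩ <;> linarith

theorem cycleABC_inter_cycleACB_subset : cycleABC ∩ cycleACB ⊆ {x | shareAB x = 1 / 2} :=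
  fun _ ⟨⟨_, _, hab, _⟩, ⟨_, _, hab', _⟩⟩ => le_antisymm hab' hab

theorem condorcetParadox_diff_subset : condorcetParadox \ (cycleABC ∪ cycleACB) ⊆
    {x | shareAB x = 1 / 2} ∪ {x | shareAC x = 1 / 2} ∪ {x | shareBC x = 1 / 2} := by
  rintro x ⟨⟨hpos, hsum, hA, hB, hC⟩, hcyc⟩
  by_contra! hties
  simp only [Set.mem_union, Set.mem_ofPred_eq, not_or] at hties
  obtain ⟨⟨hab, hac⟩, hbc⟩ := hties
  push Not at hA hB hC
  apply hcyc
  rcases lt_or_gt_of_ne hab with hab | hab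
  · have hbc : shareBC x < 1 / 2 :=
      lt_of_le_of_ne (not_lt.1 fun h => (hB h).not_gt hab) hbc
    exact Or.inr ⟨hpos, hsum, hab.le, hbc.le, not_lt.1 fun h => (hC h).not_gt hbc⟩
  · have hac : shareAC x < 1 / 2 := lt_of_le_of_ne (hA hab) hac
    exact Or.inl ⟨hpos, hsum, hab.le, hC hac, hac.le⟩

theorem condorcetParadox_ae_eq :
    condorcetParadox =ᵐ[volume] (cycleABC ∪ cycleACB : Set (Fin 5 → ℝ)) := by
  refine ae_eq_set.2 ⟨measure_mono_null condorcetParadox_diff_subset ?_, ?_⟩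
  · simp only [measure_union_null_iff]
    exact ⟨⟨volume_setOf_add_add_eq 0 1 4 _, volume_setOf_add_add_eq 0 1 2 _⟩,
      volume_setOf_add_add_eq 0 2 3 _⟩
  · rw [Set.sdiff_eq_empty.2 cycleABC_union_cycleACB_subset, measure_empty]

theorem volume_condorcetParadox : volume condorcetParadox = 1 / 1920 := by
  have hdisj : AEDisjoint volume cycleABC cycleACB :=
    measure_mono_null cycleABC_inter_cycleACB_subset (volume_setOf_add_add_eq 0 1 4 _)
  rw [measure_congr condorcetParadox_ae_eq,
    measure_union₀ measurableSet_cycleACB.nullMeasurableSet hdisj,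
    volume_cycleABC, volume_cycleACB, volume_cornerSimplex 5 (by norm_num),
    ← ENNReal.ofReal_add (by positivity) (by positivity),
    ← ENNReal.toReal_eq_toReal_iff' ENNReal.ofReal_ne_top (by finiteness),
    ENNReal.toReal_ofReal (by positivity)]
  norm_num [Nat.factorial]

/-- The 5-dimensional Lebesgue volume of the set of voting situations with no
Condorcet winner (Condorcet's paradox) equals `1/1920`; equivalently, the limiting
probability of Condorcet's paradox under IAC for 3 candidates is `120 · 1/1920 = 1/16`.
Here `u = x1+x2+x5`, `v = x1+x2+x3`, `w = x1+x3+x4` are the proportions preferring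
`a` to `b`, `a` to `c`, `b` to `c` respectively (0-indexed coordinates below). -/
theorem volume_condorcet_paradox :
    volume {x : Fin 5 → ℝ |
      (∀ i, 0 ≤ x i) ∧ x 0 + x 1 + x 2 + x 3 + x 4 ≤ 1 ∧
      ¬((1:ℝ)/2 < x 0 + x 1 + x 4 ∧ (1:ℝ)/2 < x 0 + x 1 + x 2) ∧
      ¬((1:ℝ)/2 < x 0 + x 2 + x 3 ∧ x 0 + x 1 + x 4 < (1:ℝ)/2) ∧
      ¬(x 0 + x 1 + x 2 < (1:ℝ)/2 ∧ x 0 + x 2 + x 3 < (1:ℝ)/2)} = 1 / 1920 ∧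
    120 * volume {x : Fin 5 → ℝ |
      (∀ i, 0 ≤ x i) ∧ x 0 + x 1 + x 2 + x 3 + x 4 ≤ 1 ∧
      ¬((1:ℝ)/2 < x 0 + x 1 + x 4 ∧ (1:ℝ)/2 < x 0 + x 1 + x 2) ∧
      ¬((1:ℝ)/2 < x 0 + x 2 + x 3 ∧ x 0 + x 1 + x 4 < (1:ℝ)/2) ∧
      ¬(x 0 + x 1 + x 2 < (1:ℝ)/2 ∧ x 0 + x 2 + x 3 < (1:ℝ)/2)} = 1 / 16 := by
  refine ⟨volume_condorcetParadox, ?_⟩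
  change 120 * volume condorcetParadox = _
  rw [volume_condorcetParadox, ← ENNReal.toReal_eq_toReal_iff' (by finiteness) (by finiteness)]
  norm_num
end

section
/- With P_1 = {x ∈ S : x1+2x2+x3+2x5 ≥ 1, 2x1+x2+2x3+x5 ≥ 1} (a wins under antiplurality) and P_C = {x ∈ S : 2(x1+x2+x5) ≥ 1, 2(x1+x2+x3) ≥ 1} (a is the Condorcet winner), the ratio vol(P_1 ∩ P_C)/vol(P_C) equals 17/27; that is, the limiting Condorcet efficiency of the antiplurality rule under IAC for 3 candidates is 17/27. -/
/-!
In the unimodular coordinates `s = x 0 + x 1 + x 2 + x 4`, `q = x 1 + x 4`, `x 2`, `x 3`, `x 4`,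
the point `x` lies in `P_C` iff `1/2 ≤ s ≤ 1`, `0 ≤ q ≤ s` and `(x 2, x 3, x 4)` lies in the box
`[0, min (s - q) (s - 1/2)] × [0, 1 - s] × [0, min q (s - 1/2)]`; it lies moreover in `P_1` iff
`1 - s ≤ q ≤ 2 s - 1`, a condition on `(s, q)` alone. Both volumes are thus integrals over a
plane region of `(1 - s) * min (s - q) h * min q h` with `h = s - 1/2`. The `q`-integral of the
two truncated ramps is elementary and leaves piecewise polynomials in `s`, with integrals `1/384`
and `17/10368`.
-/

open MeasureTheory Set

theorem piFinSuccAbove_zero_symm_apply {n : ℕ} (t : ℝ) (z : Fin n → ℝ) :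
    (MeasurableEquiv.piFinSuccAbove (fun _ : Fin (n + 1) => ℝ) 0).symm (t, z) = Fin.cons t z := by
  simp [MeasurableEquiv.piFinSuccAbove_symm_apply, Fin.insertNthEquiv]

theorem measurable_fin_cons {n : ℕ} (t : ℝ) :
    Measurable fun z : Fin n → ℝ => (Fin.cons t z : Fin (n + 1) → ℝ) := by
  simpa only [Function.comp_def, piFinSuccAbove_zero_symm_apply] using
    (MeasurableEquiv.piFinSuccAbove (fun _ : Fin (n + 1) => ℝ) 0).symm.measurable.comp
      (measurable_prodMk_left (x := t))

theorem volume_eq_lintegral_volume_fin_cons {n : ℕ} {S : Set (Fin (n + 1) → ℝ)}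
    (hS : MeasurableSet S) :
    volume S = ∫⁻ t, volume {z : Fin n → ℝ | Fin.cons t z ∈ S} := by
  have e := (volume_preserving_piFinSuccAbove (fun _ : Fin (n + 1) => ℝ) 0).symm
  rw [← e.measure_preimage hS.nullMeasurableSet, Measure.volume_eq_prod,
    Measure.prod_apply (hS.preimage e.measurable)]
  simp only [preimage, mem_ofPred_eq, piFinSuccAbove_zero_symm_apply]

theorem lintegral_Icc_ofReal {f : ℝ → ℝ} {a b : ℝ} (hab : a ≤ b)
    (hf : ContinuousOn f (Icc a b)) (hf0 : ∀ x ∈ Icc a b, 0 ≤ f x) :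
    ∫⁻ x in Icc a b, ENNReal.ofReal (f x) = ENNReal.ofReal (∫ x in a..b, f x) := by
  rw [intervalIntegral.integral_of_le hab, ← integral_Icc_eq_integral_Ioc,
    ofReal_integral_eq_lintegral_ofReal hf.integrableOn_Icc
      ((ae_restrict_iff' measurableSet_Icc).2 (Filter.Eventually.of_forall hf0))]

theorem continuous_intervalIntegral_of_continuous {l u : ℝ → ℝ} {F : ℝ → ℝ → ℝ}
    (hF : Continuous (Function.uncurry F)) (hl : Continuous l) (hu : Continuous u) :
    Continuous fun s => ∫ q in l s..u s, F s q := by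
  have hI : ∀ s a b, IntervalIntegrable (F s) volume a b := fun s a b =>
    (hF.comp (Continuous.prodMk_right s)).intervalIntegrable a b
  have hsub : (fun s => ∫ q in l s..u s, F s q) =
      fun s => (∫ q in 0..u s, F s q) - ∫ q in 0..l s, F s q :=
    funext fun s => (intervalIntegral.integral_interval_sub_left (hI s 0 _) (hI s 0 _)).symm
  rw [hsub]
  exact (intervalIntegral.continuous_parametric_intervalIntegral_of_continuous hF hu).sub
    (intervalIntegral.continuous_parametric_intervalIntegral_of_continuous hF hl)

theorem lintegral_Icc_lintegral_Icc_ofReal {a b : ℝ} {l u : ℝ → ℝ} {F : ℝ → ℝ → ℝ}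
    (hab : a ≤ b) (hl : Continuous l) (hu : Continuous u) (hF : Continuous (Function.uncurry F))
    (hlu : ∀ s ∈ Icc a b, l s ≤ u s) (hF0 : ∀ s ∈ Icc a b, ∀ q ∈ Icc (l s) (u s), 0 ≤ F s q) :
    ∫⁻ s in Icc a b, ∫⁻ q in Icc (l s) (u s), ENNReal.ofReal (F s q) =
      ENNReal.ofReal (∫ s in a..b, ∫ q in l s..u s, F s q) := by
  have hFs : ∀ s, Continuous (F s) := fun s => hF.comp (Continuous.prodMk_right s)
  rw [setLIntegral_congr_fun measurableSet_Icc fun s hs =>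
    lintegral_Icc_ofReal (hlu s hs) (hFs s).continuousOn (hF0 s hs)]
  exact lintegral_Icc_ofReal hab (continuous_intervalIntegral_of_continuous hF hl hu).continuousOn
    fun s hs => intervalIntegral.integral_nonneg (hlu s hs) (hF0 s hs)

theorem continuous_uncurry_prod {n : ℕ} {w : ℝ → ℝ → Fin n → ℝ}
    (hw : Continuous (Function.uncurry w)) :
    Continuous (Function.uncurry fun s q => ∏ i, w s q i) :=
  continuous_finsetProd _ fun i _ => (continuous_apply i).comp hw

def boxFibred {n : ℕ} (a b : ℝ) (l u : ℝ → ℝ) (w : ℝ → ℝ → Fin n → ℝ) :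
    Set (Fin (n + 2) → ℝ) :=
  {y | y 0 ∈ Icc a b ∧ y 1 ∈ Icc (l (y 0)) (u (y 0)) ∧
    Fin.tail (Fin.tail y) ∈ Icc 0 (w (y 0) (y 1))}

section BoxFibred
variable {n : ℕ} {a b : ℝ} {l u : ℝ → ℝ} {w : ℝ → ℝ → Fin n → ℝ}

theorem measurableSet_boxFibred (hl : Measurable l) (hu : Measurable u)
    (hw : Measurable (Function.uncurry w)) : MeasurableSet (boxFibred a b l u w) := by
  have h0 : Measurable fun y : Fin (n + 2) → ℝ => y 0 := measurable_pi_apply 0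
  have h1 : Measurable fun y : Fin (n + 2) → ℝ => y 1 := measurable_pi_apply 1
  have ht : Measurable fun y : Fin (n + 2) → ℝ => Fin.tail (Fin.tail y) :=
    measurable_pi_iff.2 fun i => measurable_pi_apply _
  exact (measurableSet_Icc.preimage h0).inter (((measurableSet_le (hl.comp h0) h1).inter
    (measurableSet_le h1 (hu.comp h0))).inter ((measurableSet_le measurable_const ht).inter
    (measurableSet_le ht (hw.comp (h0.prodMk h1)))))

theorem volume_boxFibred (hl : Measurable l) (hu : Measurable u)
    (hw : Measurable (Function.uncurry w)) :
    volume (boxFibred a b l u w) =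
      ∫⁻ s in Icc a b, ∫⁻ q in Icc (l s) (u s), ∏ i, ENNReal.ofReal (w s q i) := by
  have hB := measurableSet_boxFibred (a := a) (b := b) hl hu hw
  rw [volume_eq_lintegral_volume_fin_cons hB, ← lintegral_indicator measurableSet_Icc]
  refine lintegral_congr fun s => ?_
  rw [volume_eq_lintegral_volume_fin_cons (S := {z | Fin.cons s z ∈ boxFibred a b l u w})
    (hB.preimage (measurable_fin_cons s))]
  by_cases hs : s ∈ Icc a b
  · rw [indicator_of_mem hs, ← lintegral_indicator measurableSet_Icc]
    refine lintegral_congr fun q => ?_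
    by_cases hq : q ∈ Icc (l s) (u s)
    · simp only [boxFibred, mem_ofPred_eq, Fin.cons_zero, Fin.cons_one, Fin.tail_cons, hs, hq,
        true_and, indicator_of_mem, ofPred_mem_eq, Real.volume_Icc_pi, Pi.zero_apply, sub_zero]
    · simp only [boxFibred, mem_ofPred_eq, Fin.cons_zero, Fin.cons_one, Fin.tail_cons, hq,
        false_and, and_false, indicator_of_notMem, not_false_eq_true, ofPred_false, measure_empty]
  · simp only [boxFibred, mem_ofPred_eq, Fin.cons_zero, Fin.cons_one, Fin.tail_cons, hs,
      false_and, indicator_of_notMem, not_false_eq_true, ofPred_false, mem_empty_iff_false,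
      measure_empty, lintegral_zero]

theorem volume_boxFibred_eq_ofReal (hab : a ≤ b) (hl : Continuous l) (hu : Continuous u)
    (hw : Continuous (Function.uncurry w)) (hlu : ∀ s ∈ Icc a b, l s ≤ u s)
    (hw0 : ∀ s ∈ Icc a b, ∀ q ∈ Icc (l s) (u s), 0 ≤ w s q) :
    volume (boxFibred a b l u w) =
      ENNReal.ofReal (∫ s in a..b, ∫ q in l s..u s, ∏ i, w s q i) := by
  rw [volume_boxFibred hl.measurable hu.measurable hw.measurable,
    ← lintegral_Icc_lintegral_Icc_ofReal hab hl hu (continuous_uncurry_prod hw) hlu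
      fun s hs q hq => Finset.prod_nonneg fun i _ => hw0 s hs q hq i]
  refine setLIntegral_congr_fun measurableSet_Icc fun s hs => ?_
  refine setLIntegral_congr_fun measurableSet_Icc fun q hq => ?_
  exact (ENNReal.ofReal_prod_of_nonneg fun i _ => hw0 s hs q hq i).symm

end BoxFibred

section TruncatedRamps
variable {c d h s : ℝ}

theorem integral_min_mul_min_of_le (hhc : h ≤ c) (hcd : c ≤ d) (hs : c + d = s) :
    ∫ q in c..d, min (s - q) h * min q h = h ^ 2 * (d - c) := by
  rw [intervalIntegral.integral_congr (g := fun _ => h ^ 2) fun q hq => ?_]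
  · simp only [intervalIntegral.integral_const, smul_eq_mul]
    ring
  rw [uIcc_of_le hcd] at hq
  simp only [min_eq_right (show h ≤ s - q by linarith [hq.2]), min_eq_right (hhc.trans hq.1), sq]

theorem integral_min_mul_min_of_ge (hch : c ≤ h) (hhs : 2 * h ≤ s) (hs : c + d = s) :
    ∫ q in c..d, min (s - q) h * min q h = h ^ 2 * (s - 2 * h) + h * (h ^ 2 - c ^ 2) := by
  have hf : ∀ a b, IntervalIntegrable (fun q => min (s - q) h * min q h) volume a b :=
    fun a b => Continuous.intervalIntegrable (by fun_prop) a b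
  rw [← intervalIntegral.integral_add_adjacent_intervals (hf c h) (hf h d),
    ← intervalIntegral.integral_add_adjacent_intervals (hf h (s - h)) (hf (s - h) d),
    integral_min_mul_min_of_le le_rfl (by linarith) (by ring),
    intervalIntegral.integral_congr (g := fun q => h * q) fun q hq => ?_,
    intervalIntegral.integral_congr (a := s - h) (g := fun q => h * (s - q)) fun q hq => ?_]
  · have hsd : s - d = c := by linarith
    rw [intervalIntegral.integral_const_mul, intervalIntegral.integral_const_mul,
      intervalIntegral.integral_comp_sub_left (fun q => q), integral_id, integral_id, hsd]
    ring
  · rw [uIcc_of_le (by linarith)] at hq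
    simp only [min_eq_left (show s - q ≤ h by linarith [hq.1]),
      min_eq_right (show h ≤ q by linarith [hq.1])]
    ring
  · rw [uIcc_of_le hch] at hq
    simp only [min_eq_right (show h ≤ s - q by linarith [hq.2]), min_eq_left hq.2]

end TruncatedRamps

def condorcetCoords : (Fin 5 → ℝ) →ₗ[ℝ] Fin 5 → ℝ :=
  Matrix.toLin' !![1, 1, 1, 0, 1; 0, 1, 0, 0, 1; 0, 0, 1, 0, 0; 0, 0, 0, 1, 0; 0, 0, 0, 0, 1]

theorem condorcetCoords_apply (x : Fin 5 → ℝ) :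
    condorcetCoords x = ![x 0 + x 1 + x 2 + x 4, x 1 + x 4, x 2, x 3, x 4] := by
  ext i
  fin_cases i <;> simp [condorcetCoords, Matrix.mulVec, dotProduct, Fin.sum_univ_five]

theorem det_condorcetCoords : LinearMap.det condorcetCoords = 1 := by
  rw [condorcetCoords, LinearMap.det_toLin', Matrix.det_of_isUpperTriangular]
  · simp [Fin.prod_univ_five]
  · intro i j hij
    fin_cases i <;> fin_cases j <;> simp_all

theorem volume_preimage_condorcetCoords (S : Set (Fin 5 → ℝ)) :
    volume (condorcetCoords ⁻¹' S) = volume S := by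
  rw [Measure.addHaar_preimage_linearMap _ (by simp [det_condorcetCoords]), det_condorcetCoords]
  simp

noncomputable def fibreWidths (s q : ℝ) : Fin 3 → ℝ :=
  ![min (s - q) (s - 1 / 2), 1 - s, min q (s - 1 / 2)]

theorem continuous_fibreWidths : Continuous (Function.uncurry fibreWidths) :=
  continuous_pi fun i => by
    fin_cases i <;>
      simp only [Function.uncurry_def, fibreWidths, Fin.reduceFinMk, Matrix.cons_val] <;> fun_prop

theorem fibreWidths_nonneg {s q : ℝ} (hs : 1 / 2 ≤ s) (hs1 : s ≤ 1) (hq : 0 ≤ q) (hqs : q ≤ s) :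
    0 ≤ fibreWidths s q := by
  intro i
  fin_cases i
  · exact le_min (sub_nonneg.2 hqs) (sub_nonneg.2 hs)
  · exact sub_nonneg.2 hs1
  · exact le_min hq (sub_nonneg.2 hs)

theorem prod_fibreWidths (s q : ℝ) :
    ∏ i, fibreWidths s q i = (1 - s) * (min (s - q) (s - 1 / 2) * min q (s - 1 / 2)) := by
  simp only [fibreWidths, Fin.prod_univ_three, Matrix.cons_val]
  ring

def condorcetRegion : Set (Fin 5 → ℝ) :=
  {x | (∀ i, 0 ≤ x i) ∧ x 0 + x 1 + x 2 + x 3 + x 4 ≤ 1 ∧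
    1 ≤ 2 * (x 0 + x 1 + x 4) ∧ 1 ≤ 2 * (x 0 + x 1 + x 2)}

def antipluralityRegion : Set (Fin 5 → ℝ) :=
  {x | (∀ i, 0 ≤ x i) ∧ x 0 + x 1 + x 2 + x 3 + x 4 ≤ 1 ∧
    1 ≤ x 0 + 2 * x 1 + x 2 + 2 * x 4 ∧ 1 ≤ 2 * x 0 + x 1 + 2 * x 2 + x 4}

theorem condorcetRegion_eq_preimage :
    condorcetRegion = condorcetCoords ⁻¹' boxFibred (1 / 2) 1 (fun _ => 0) id fibreWidths := by
  ext x
  simp only [condorcetRegion, boxFibred, preimage_ofPred_eq, mem_ofPred_eq, condorcetCoords_apply,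
    fibreWidths, Fin.forall_fin_succ, Fin.succ_zero_eq_one, Fin.succ_one_eq_two, Fin.reduceSucc,
    IsEmpty.forall_iff, and_true, mem_Icc, Pi.le_def, Pi.zero_apply, le_min_iff, id,
    Matrix.cons_val, Fin.tail_vecCons]
  constructor <;> intro h <;> casesm* _ ∧ _ <;> and_intros <;> linarith

theorem antipluralityRegion_inter_condorcetRegion_eq_preimage :
    antipluralityRegion ∩ condorcetRegion = condorcetCoords ⁻¹'
      boxFibred (2 / 3) 1 (fun s => 1 - s) (fun s => 2 * s - 1) fibreWidths := by
  ext x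
  simp only [antipluralityRegion, condorcetRegion, mem_inter_iff, boxFibred, preimage_ofPred_eq,
    mem_ofPred_eq, condorcetCoords_apply, fibreWidths, Fin.forall_fin_succ, Fin.succ_zero_eq_one,
    Fin.succ_one_eq_two, Fin.reduceSucc, IsEmpty.forall_iff, and_true, mem_Icc, Pi.le_def,
    Pi.zero_apply, le_min_iff, Matrix.cons_val, Fin.tail_vecCons]
  constructor <;> intro h <;> casesm* _ ∧ _ <;> and_intros <;> linarith

theorem volume_condorcetRegion : volume condorcetRegion = ENNReal.ofReal (1 / 384) := by
  rw [condorcetRegion_eq_preimage, volume_preimage_condorcetCoords,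
    volume_boxFibred_eq_ofReal (by norm_num) continuous_const continuous_id continuous_fibreWidths
      (fun s hs => (by norm_num : (0 : ℝ) ≤ 1 / 2).trans hs.1)
      fun s hs q hq => fibreWidths_nonneg hs.1 hs.2 hq.1 hq.2]
  congr 1
  calc ∫ s in (1 / 2 : ℝ)..1, ∫ q in (0 : ℝ)..id s, ∏ i, fibreWidths s q i
      = ∫ s in (1 / 2 : ℝ)..1, (1 - s) * ((s - 1 / 2) ^ 2 * (1 - s) + (s - 1 / 2) ^ 3) := by
        refine intervalIntegral.integral_congr fun s hs => ?_
        rw [uIcc_of_le (by norm_num)] at hs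
        simp only [id, prod_fibreWidths, intervalIntegral.integral_const_mul]
        rw [integral_min_mul_min_of_ge (by linarith [hs.1]) (by linarith [hs.2]) (zero_add s)]
        ring
    _ = 1 / 384 := by
        ring_nf
        simp (disch := exact Continuous.intervalIntegrable (by fun_prop) _ _) only
          [intervalIntegral.integral_add, intervalIntegral.integral_mul_const, integral_pow,
           integral_id, intervalIntegral.integral_const, smul_eq_mul]
        norm_num

theorem volume_antiplurality_inter_condorcet :
    volume (antipluralityRegion ∩ condorcetRegion) = ENNReal.ofReal (17 / 10368) := by
  rw [antipluralityRegion_inter_condorcetRegion_eq_preimage, volume_preimage_condorcetCoords,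
    volume_boxFibred_eq_ofReal (by norm_num) (by fun_prop) (by fun_prop) continuous_fibreWidths
      (fun s hs => by linarith [hs.1])
      fun s hs q hq => fibreWidths_nonneg (by linarith [hs.1]) hs.2 (by linarith [hq.1, hs.2])
        (by linarith [hq.2, hs.2])]
  have hG : ∀ a b, IntervalIntegrable
      (fun s => ∫ q in (1 - s)..(2 * s - 1), ∏ i, fibreWidths s q i) volume a b :=
    fun a b => (continuous_intervalIntegral_of_continuous
      (continuous_uncurry_prod continuous_fibreWidths) (by fun_prop)
        (by fun_prop)).intervalIntegrable a b
  -- at `s = 3/4` the lower end `1 - s` of the `q`-range crosses the kink `s - 1/2` of the ramps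
  rw [← intervalIntegral.integral_add_adjacent_intervals (hG _ (3 / 4)) (hG (3 / 4) _)]
  congr 1
  calc _ = (∫ s in (2 / 3 : ℝ)..(3 / 4), (1 - s) * ((s - 1 / 2) ^ 2 * (3 * s - 2))) +
        ∫ s in (3 / 4 : ℝ)..1, (1 - s) *
          ((s - 1 / 2) ^ 2 * (1 - s) + (s - 1 / 2) * ((s - 1 / 2) ^ 2 - (1 - s) ^ 2)) := by
        congr 1
        · refine intervalIntegral.integral_congr fun s hs => ?_
          rw [uIcc_of_le (by norm_num)] at hs
          simp only [prod_fibreWidths, intervalIntegral.integral_const_mul]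
          rw [integral_min_mul_min_of_le (by linarith [hs.2]) (by linarith [hs.1]) (by ring)]
          ring
        · refine intervalIntegral.integral_congr fun s hs => ?_
          rw [uIcc_of_le (by norm_num)] at hs
          simp only [prod_fibreWidths, intervalIntegral.integral_const_mul]
          rw [integral_min_mul_min_of_ge (by linarith [hs.1]) (by linarith [hs.2]) (by ring)]
          ring
    _ = 17 / 10368 := by
        ring_nf
        simp (disch := exact Continuous.intervalIntegrable (by fun_prop) _ _) only
          [intervalIntegral.integral_add, intervalIntegral.integral_sub,
           intervalIntegral.integral_mul_const, integral_pow, integral_id,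
           intervalIntegral.integral_const, smul_eq_mul]
        norm_num

/-- The limiting Condorcet efficiency of the antiplurality rule under IAC for 3
candidates: `vol(P₁ ∩ P_C)/vol(P_C) = 17/27`, where `P₁` is the set of voting
situations in which `a` wins under antiplurality and `P_C` the set where `a` is
the Condorcet winner. -/
theorem condorcet_efficiency_antiplurality :
    volume ({x : Fin 5 → ℝ |
        (∀ i, 0 ≤ x i) ∧ x 0 + x 1 + x 2 + x 3 + x 4 ≤ 1 ∧
        1 ≤ x 0 + 2 * x 1 + x 2 + 2 * x 4 ∧
        1 ≤ 2 * x 0 + x 1 + 2 * x 2 + x 4} ∩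
      {x : Fin 5 → ℝ |
        (∀ i, 0 ≤ x i) ∧ x 0 + x 1 + x 2 + x 3 + x 4 ≤ 1 ∧
        1 ≤ 2 * (x 0 + x 1 + x 4) ∧ 1 ≤ 2 * (x 0 + x 1 + x 2)}) /
    volume {x : Fin 5 → ℝ |
        (∀ i, 0 ≤ x i) ∧ x 0 + x 1 + x 2 + x 3 + x 4 ≤ 1 ∧
        1 ≤ 2 * (x 0 + x 1 + x 4) ∧ 1 ≤ 2 * (x 0 + x 1 + x 2)} = 17 / 27 := by
  change volume (antipluralityRegion ∩ condorcetRegion) / volume condorcetRegion = 17 / 27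
  rw [volume_antiplurality_inter_condorcet, volume_condorcetRegion,
    ← ENNReal.ofReal_div_of_pos (by norm_num),
    show (17 / 10368 : ℝ) / (1 / 384) = 17 / 27 by norm_num,
    ENNReal.ofReal_div_of_pos (by norm_num)]
  norm_num
end

section
/- The 5-dimensional Lebesgue volume of the set {x ∈ S : x1+x2−x3−x4 ≥ 0, 2x1+2x2+x3+x4 ≥ 1, 2(x1+x2+x5) ≤ 1, 2(x1+x2+x3) ≤ 1} (a is the plurality winner and also the Condorcet loser) equals 1/12960; that is, the limiting probability of Borda's paradox for the plurality rule under IAC for 3 candidates is 3·120·(1/12960) = 1/36. -/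
/-!
After the shear `(a, b, c, d, y) ↦ (a + b, a, c, c + d, y)`, of determinant `-1`, the region
becomes the set of points whose first coordinate is the plurality score `s = a + b` of `a`
and whose last four coordinates range over the box
`[0, s] × [0, 1/2 - s] × [1 - 2s, s] × [0, 1/2 - s]`.
By Cavalieri's principle its volume is `∫_{1/3}^{1/2} s (1/2 - s)² (3s - 1) ds = 1/12960`.
-/

open MeasureTheory Set
open scoped ENNReal

theorem volume_setOf_tail_mem {α : Type*} [MeasureSpace α] [SigmaFinite (volume : Measure α)]
    {n : ℕ} {S : α → Set (Fin n → α)}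
    (hS : MeasurableSet {z : Fin (n + 1) → α | Fin.tail z ∈ S (z 0)}) :
    volume {z : Fin (n + 1) → α | Fin.tail z ∈ S (z 0)} = ∫⁻ s, volume (S s) := by
  let e := MeasurableEquiv.piFinSuccAbove (fun _ : Fin (n + 1) => α) 0
  have hpre : {z : Fin (n + 1) → α | Fin.tail z ∈ S (z 0)} = e ⁻¹' {p | p.2 ∈ S p.1} :=
    rfl
  rw [hpre] at hS ⊢
  rw [(volume_preserving_piFinSuccAbove (fun _ : Fin (n + 1) => α) 0).measure_preimage_equiv,
    Measure.volume_eq_prod, Measure.prod_apply (e.measurableSet_preimage.mp hS)]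
  rfl

namespace BordaPlurality

def region : Set (Fin 5 → ℝ) :=
  {x | (∀ i, 0 ≤ x i) ∧ x 0 + x 1 + x 2 + x 3 + x 4 ≤ 1 ∧
    0 ≤ x 0 + x 1 - x 2 - x 3 ∧ 1 ≤ 2 * x 0 + 2 * x 1 + x 2 + x 3 ∧
    2 * (x 0 + x 1 + x 4) ≤ 1 ∧ 2 * (x 0 + x 1 + x 2) ≤ 1}

def shear : (Fin 5 → ℝ) →ₗ[ℝ] (Fin 5 → ℝ) :=
  Matrix.toLin' !![1, 1, 0, 0, 0; 1, 0, 0, 0, 0; 0, 0, 1, 0, 0; 0, 0, 1, 1, 0; 0, 0, 0, 0, 1]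

theorem shear_apply (x : Fin 5 → ℝ) : shear x = ![x 0 + x 1, x 0, x 2, x 2 + x 3, x 4] := by
  ext i
  fin_cases i <;> simp [shear, Matrix.mulVec, dotProduct, Fin.sum_univ_succ]

theorem det_shear : LinearMap.det shear = -1 := by
  rw [shear, LinearMap.det_toLin']
  simp [Matrix.det_succ_row_zero, Fin.sum_univ_succ, Fin.succAbove]

def box (s : ℝ) : Set (Fin 4 → ℝ) := Icc ![0, 0, 1 - 2 * s, 0] ![s, 1 / 2 - s, s, 1 / 2 - s]

theorem measurableSet_setOf_tail_mem_box :
    MeasurableSet {z : Fin 5 → ℝ | Fin.tail z ∈ box (z 0)} := by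
  simp only [box, mem_Icc, ofPred_and]
  exact (measurableSet_le (by fun_prop) (by fun_prop)).inter
    (measurableSet_le (by fun_prop) (by fun_prop))

theorem region_eq_preimage_shear : region = shear ⁻¹' {z | Fin.tail z ∈ box (z 0)} := by
  ext x
  simp only [region, box, mem_ofPred_eq, mem_preimage, shear_apply, mem_Icc, Pi.le_def,
    Fin.forall_fin_succ, Fin.tail, Fin.succ_zero_eq_one, Fin.succ_one_eq_two, Fin.reduceSucc,
    Matrix.cons_val_zero, Matrix.cons_val_one, Matrix.cons_val, Matrix.cons_val_succ,
    IsEmpty.forall_iff, and_true]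
  constructor
  · rintro ⟨⟨ha, hb, hc, -, hy⟩, -, hcd, hplur, hy', hc'⟩
    exact ⟨⟨ha, hc, by linarith, hy⟩, by linarith, by linarith, by linarith, by linarith⟩
  · rintro ⟨⟨ha, hc, he, hy⟩, has, hc', he', hy'⟩
    exact ⟨⟨ha, by linarith, hc, by linarith, hy⟩, by linarith, by linarith, by linarith,
      by linarith, by linarith⟩

theorem volume_box (s : ℝ) :
    volume (box s) = (Icc (1 / 3) (1 / 2)).indicator
      (fun s => ENNReal.ofReal (s * (1 / 2 - s) ^ 2 * (3 * s - 1))) s := by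
  rw [box, Real.volume_Icc_pi, Fin.prod_univ_four]
  simp only [Matrix.cons_val_zero, Matrix.cons_val_one, Matrix.cons_val_two,
    Matrix.cons_val_three, Matrix.head_cons, Matrix.tail_cons, sub_zero]
  by_cases hs : s ∈ Icc (1 / 3 : ℝ) (1 / 2)
  · rw [indicator_of_mem hs]
    obtain ⟨h3, h2⟩ := hs
    have ha : 0 ≤ s := by linarith
    have hc : 0 ≤ 1 / 2 - s := by linarith
    have he : 0 ≤ s - (1 - 2 * s) := by linarith
    rw [← ENNReal.ofReal_mul ha, ← ENNReal.ofReal_mul (mul_nonneg ha hc),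
      ← ENNReal.ofReal_mul (mul_nonneg (mul_nonneg ha hc) he)]
    congr 1
    ring
  · rw [indicator_of_notMem hs]
    rcases not_and_or.mp hs with h3 | h2
    · rw [ENNReal.ofReal_of_nonpos (p := s - (1 - 2 * s)) (by linarith [not_le.mp h3])]
      simp
    · rw [ENNReal.ofReal_of_nonpos (p := 1 / 2 - s) (by linarith [not_le.mp h2])]
      simp

theorem integral_score_density :
    ∫ s in (1 / 3 : ℝ)..1 / 2, s * (1 / 2 - s) ^ 2 * (3 * s - 1) = 1 / 12960 := by
  have hderiv (s : ℝ) :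
      HasDerivAt (fun t : ℝ => 3 / 5 * t ^ 5 - t ^ 4 + 7 / 12 * t ^ 3 - 1 / 8 * t ^ 2)
        (s * (1 / 2 - s) ^ 2 * (3 * s - 1)) s :=
    ((((hasDerivAt_pow 5 s).const_mul (3 / 5)).sub (hasDerivAt_pow 4 s)).add
      ((hasDerivAt_pow 3 s).const_mul (7 / 12))).sub ((hasDerivAt_pow 2 s).const_mul (1 / 8))
      |>.congr_deriv (by norm_num; ring)
  rw [intervalIntegral.integral_eq_sub_of_hasDerivAt (fun s _ => hderiv s)
    (Continuous.intervalIntegrable (by fun_prop) _ _)]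
  norm_num

theorem volume_region : volume region = 1 / 12960 := by
  have hdet : LinearMap.det shear ≠ 0 := by norm_num [det_shear]
  calc volume region = volume {z : Fin 5 → ℝ | Fin.tail z ∈ box (z 0)} := by
        rw [region_eq_preimage_shear, Measure.addHaar_preimage_linearMap _ hdet, det_shear]
        norm_num
    _ = ∫⁻ s, volume (box s) := volume_setOf_tail_mem measurableSet_setOf_tail_mem_box
    _ = ∫⁻ s in Icc (1 / 3) (1 / 2), ENNReal.ofReal (s * (1 / 2 - s) ^ 2 * (3 * s - 1)) := by
        simp_rw [volume_box]
        exact lintegral_indicator measurableSet_Icc _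
    _ = ENNReal.ofReal (∫ s in (1 / 3 : ℝ)..1 / 2, s * (1 / 2 - s) ^ 2 * (3 * s - 1)) := by
        rw [intervalIntegral.integral_of_le (by norm_num), ← integral_Icc_eq_integral_Ioc,
          ofReal_integral_eq_lintegral_ofReal (Continuous.integrableOn_Icc (by fun_prop))]
        exact (ae_restrict_iff' measurableSet_Icc).2 (ae_of_all _ fun s hs =>
          mul_nonneg (mul_nonneg (by linarith [hs.1]) (sq_nonneg _)) (by linarith [hs.1]))
    _ = 1 / 12960 := by
        rw [integral_score_density, ENNReal.ofReal_div_of_pos (by norm_num), ENNReal.ofReal_one,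
          ENNReal.ofReal_ofNat]

end BordaPlurality

/-- The 5-dimensional Lebesgue volume of the set of voting situations in which
`a` is the plurality winner and also the Condorcet loser equals `1/12960`;
that is, the limiting probability of Borda's paradox for the plurality rule
under IAC for 3 candidates is `3·120·(1/12960) = 1/36`. -/
theorem borda_paradox_plurality :
    volume {x : Fin 5 → ℝ |
      (∀ i, 0 ≤ x i) ∧ x 0 + x 1 + x 2 + x 3 + x 4 ≤ 1 ∧
      0 ≤ x 0 + x 1 - x 2 - x 3 ∧ 1 ≤ 2 * x 0 + 2 * x 1 + x 2 + x 3 ∧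
      2 * (x 0 + x 1 + x 4) ≤ 1 ∧ 2 * (x 0 + x 1 + x 2) ≤ 1} = 1 / 12960 ∧
    3 * 120 * volume {x : Fin 5 → ℝ |
      (∀ i, 0 ≤ x i) ∧ x 0 + x 1 + x 2 + x 3 + x 4 ≤ 1 ∧
      0 ≤ x 0 + x 1 - x 2 - x 3 ∧ 1 ≤ 2 * x 0 + 2 * x 1 + x 2 + x 3 ∧
      2 * (x 0 + x 1 + x 4) ≤ 1 ∧ 2 * (x 0 + x 1 + x 2) ≤ 1} = 1 / 36 := by
  have h := BordaPlurality.volume_region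
  unfold BordaPlurality.region at h
  refine ⟨h, ?_⟩
  rw [h, mul_one_div, ENNReal.div_eq_div_iff] <;> norm_num
end

section
/- The 5-dimensional Lebesgue volume of the set {x ∈ S : x1+(3/2)x2−(1/2)x4+x5 ≥ 1/2, 2x1+(3/2)x2+(3/2)x3+(1/2)x4+(1/2)x5 ≥ 1, 2(x1+x2+x5) ≤ 1, 2(x1+x2+x3) ≤ 1} (a is the Borda winner and also the Condorcet loser) equals 0; that is, the Borda rule never elects the Condorcet loser except on a set of voting situations of measure zero. -/
open MeasureTheory

noncomputable def bordaFun : (Fin 5 → ℝ) →ₗ[ℝ] ℝ :=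
  2 • LinearMap.proj (R := ℝ) (φ := fun _ : Fin 5 => ℝ) 0 +
    2 • LinearMap.proj 1 + LinearMap.proj 2 + LinearMap.proj 4

lemma bordaFun_apply (x : Fin 5 → ℝ) :
    bordaFun x = 2 * x 0 + 2 * x 1 + x 2 + x 4 := by
  simp [bordaFun, LinearMap.proj, smul_eq_mul]

/-- The 5-dimensional Lebesgue volume of the set of voting situations in which
`a` is the Borda winner and also the Condorcet loser equals `0`; that is, the
Borda rule never elects the Condorcet loser except on a set of measure zero. -/
theorem borda_paradox_borda :
    volume {x : Fin 5 → ℝ |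
      (∀ i, 0 ≤ x i) ∧ x 0 + x 1 + x 2 + x 3 + x 4 ≤ 1 ∧
      (1:ℝ)/2 ≤ x 0 + (3/2) * x 1 - (1/2) * x 3 + x 4 ∧
      1 ≤ 2 * x 0 + (3/2) * x 1 + (3/2) * x 2 + (1/2) * x 3 + (1/2) * x 4 ∧
      2 * (x 0 + x 1 + x 4) ≤ 1 ∧ 2 * (x 0 + x 1 + x 2) ≤ 1} = 0 := by
  set x₀ : Fin 5 → ℝ := fun i => if i = 0 then 1/2 else 0 with hx₀
  have hfx₀ : bordaFun x₀ = 1 := by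
    rw [bordaFun_apply]; norm_num [hx₀, show ((2:Fin 5) = 0) = False by decide, show ((4:Fin 5) = 0) = False by decide]
  have hker : LinearMap.ker bordaFun ≠ ⊤ := by
    intro h
    have : bordaFun x₀ = 0 := by
      have : x₀ ∈ LinearMap.ker bordaFun := h ▸ Submodule.mem_top
      simpa using this
    rw [hfx₀] at this; norm_num at this
  apply measure_mono_null (t := {x : Fin 5 → ℝ | bordaFun x = 1})
  · rintro x ⟨hpos, h1, h2, h3, h4, h5⟩
    rw [Set.mem_setOf_eq, bordaFun_apply]
    linarith
  · have heq : {x : Fin 5 → ℝ | bordaFun x = 1}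
        = (fun x => x + (-x₀)) ⁻¹' (LinearMap.ker bordaFun : Set (Fin 5 → ℝ)) := by
      ext x
      simp only [Set.mem_setOf_eq, Set.mem_preimage, SetLike.mem_coe, LinearMap.mem_ker,
        map_add, map_neg, hfx₀]
      constructor <;> intro h <;> linarith
    rw [heq, measure_preimage_add_right]
    exact Measure.addHaar_submodule volume _ hker
end

section
/- The 5-dimensional Lebesgue volume of the set {x ∈ S : x1+2x2+x3+2x5 ≥ 1, 2x1+x2+2x3+x5 ≥ 1, 2(x1+x2+x5) ≤ 1, 2(x1+x2+x3) ≤ 1} (a is the antiplurality winner and also the Condorcet loser) equals 17/207360; that is, the limiting probability of Borda's paradox for the antiplurality rule under IAC for 3 candidates is 3·120·(17/207360) = 17/576. -/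
/-!
Write `x = (a, b, c, d, e)`. The coordinate `d` occurs only in `x₆ ≥ 0`, and after the shear
`e ↦ a + b + e` the section at fixed `(a, c)` becomes `[0, 1/2 - a - c]` (the range of `b`) times a
trapezoid in `(e, d)`, whose `e`-range starts where the binding antiplurality constraint puts it:
`a` beating `c` when `c ≤ 1/3 - a`, and `a` beating `b` otherwise. This splits the `(a, c)`-domain
into three polygons, over which the volume is an iterated integral of polynomials.
-/

open MeasureTheory Set

section Slicing

variable {n : ℕ}

theorem volume_eq_lintegral_volume_slice {s : Set (Fin (n + 1) → ℝ)} (hs : MeasurableSet s)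
    (i : Fin (n + 1)) : volume s = ∫⁻ t, volume {y : Fin n → ℝ | Fin.insertNth i t y ∈ s} := by
  let e := MeasurableEquiv.piFinSuccAbove (fun _ : Fin (n + 1) => ℝ) i
  have he : MeasurePreserving e volume (volume.prod volume) := by
    simpa only [volume_pi] using measurePreserving_piFinSuccAbove (fun _ => volume) i
  rw [← he.symm.measure_preimage hs.nullMeasurableSet, Measure.prod_apply (e.symm.measurable hs)]
  rfl

theorem volume_eq_ofReal_integral_of_volume_slice {s : Set (Fin (n + 1) → ℝ)}
    (hs : MeasurableSet s) (i : Fin (n + 1)) {l u : ℝ} {g : ℝ → ℝ} (hlu : l ≤ u)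
    (hs_sub : ∀ x ∈ s, x i ∈ Icc l u) (hg : IntervalIntegrable g volume l u)
    (hg_nonneg : ∀ t ∈ Ioo l u, 0 ≤ g t)
    (hslice : ∀ t ∈ Ioo l u,
      volume {y : Fin n → ℝ | Fin.insertNth i t y ∈ s} = ENNReal.ofReal (g t)) :
    volume s = ENNReal.ofReal (∫ t in l..u, g t) := by
  have hae : (fun t => volume {y : Fin n → ℝ | Fin.insertNth i t y ∈ s}) =ᵐ[volume]
      (Ioo l u).indicator fun t => ENNReal.ofReal (g t) := by
    filter_upwards [(Ioo_ae_eq_Icc (μ := volume) (a := l) (b := u)).mem_iff] with t ht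
    by_cases htI : t ∈ Ioo l u
    · rw [indicator_of_mem htI, hslice t htI]
    · have hempty : {y : Fin n → ℝ | Fin.insertNth i t y ∈ s} = ∅ :=
        eq_empty_of_forall_notMem fun y hy =>
          htI (ht.2 (by simpa using hs_sub _ hy))
      rw [indicator_of_notMem htI, hempty, measure_empty]
  rw [volume_eq_lintegral_volume_slice hs i, lintegral_congr_ae hae,
    lintegral_indicator measurableSet_Ioo, intervalIntegral.integral_of_le hlu,
    integral_Ioc_eq_integral_Ioo, ofReal_integral_eq_lintegral_ofReal]
  · exact (hg.1.mono_set Ioo_subset_Ioc_self)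
  · exact (ae_restrict_iff' measurableSet_Ioo).2 (Filter.Eventually.of_forall hg_nonneg)

end Slicing

theorem volume_setOf_mem_Icc_fin_one (p q : ℝ) :
    volume {v : Fin 1 → ℝ | v 0 ∈ Icc p q} = ENNReal.ofReal (q - p) := by
  rw [← Real.volume_Icc, ← (volume_preserving_funUnique (Fin 1) ℝ).measure_preimage
    measurableSet_Icc.nullMeasurableSet]
  rfl

theorem integral_eq_of_quartic {g : ℝ → ℝ} {l u : ℝ} (c₀ c₁ c₂ c₃ c₄ : ℝ)
    (hg : ∀ t, g t = c₀ + c₁ * t + c₂ * t ^ 2 + c₃ * t ^ 3 + c₄ * t ^ 4) :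
    ∫ t in l..u, g t = c₀ * (u - l) + c₁ / 2 * (u ^ 2 - l ^ 2) + c₂ / 3 * (u ^ 3 - l ^ 3) +
      c₃ / 4 * (u ^ 4 - l ^ 4) + c₄ / 5 * (u ^ 5 - l ^ 5) := by
  have hF : ∀ t ∈ uIcc l u, HasDerivAt
      (fun t => c₀ * t + c₁ / 2 * t ^ 2 + c₂ / 3 * t ^ 3 + c₃ / 4 * t ^ 4 + c₄ / 5 * t ^ 5)
      (g t) t := fun t _ => by
    rw [hg]
    have h := ((((hasDerivAt_id t).const_mul c₀).add ((hasDerivAt_pow 2 t).const_mul (c₁ / 2))).add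
      ((hasDerivAt_pow 3 t).const_mul (c₂ / 3))).add ((hasDerivAt_pow 4 t).const_mul (c₃ / 4))
    refine (h.add ((hasDerivAt_pow 5 t).const_mul (c₄ / 5))).congr_deriv ?_
    push_cast
    ring
  have hg_cont : Continuous g := by
    rw [show g = _ from funext hg]
    fun_prop
  rw [intervalIntegral.integral_eq_sub_of_hasDerivAt hF (hg_cont.intervalIntegrable l u)]
  ring

def trapezoid (lo hi κ : ℝ) : Set (Fin 2 → ℝ) :=
  {w | (lo ≤ w 1 ∧ w 1 ≤ hi) ∧ (0 ≤ w 0 ∧ w 0 ≤ κ - w 1)}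

def shearedPrism (β lo hi κ : ℝ) : Set (Fin 3 → ℝ) :=
  {z | (0 ≤ z 0 ∧ z 0 ≤ β) ∧ (lo - z 0 ≤ z 2 ∧ z 2 ≤ hi - z 0) ∧ (0 ≤ z 1 ∧ z 1 ≤ κ - z 0 - z 2)}

theorem measurableSet_trapezoid (lo hi κ : ℝ) : MeasurableSet (trapezoid lo hi κ) := by
  rw [trapezoid, measurableSet_setOfPred]
  fun_prop

theorem measurableSet_shearedPrism (β lo hi κ : ℝ) : MeasurableSet (shearedPrism β lo hi κ) := by
  rw [shearedPrism, measurableSet_setOfPred]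
  fun_prop

theorem volume_trapezoid {lo hi κ : ℝ} (hlo : lo ≤ hi) (hκ : hi ≤ κ) :
    volume (trapezoid lo hi κ) = ENNReal.ofReal ((hi - lo) * (κ - (lo + hi) / 2)) := by
  rw [volume_eq_ofReal_integral_of_volume_slice (measurableSet_trapezoid lo hi κ) 1 hlo
    (fun w hw => hw.1) ((by fun_prop : Continuous fun t => κ - t).intervalIntegrable _ _)
    (fun t ht => by linarith [ht.2]) fun t ht => ?_]
  · rw [integral_eq_of_quartic κ (-1) 0 0 0 fun t => by ring]
    congr 1
    ring
  · have : {v : Fin 1 → ℝ | Fin.insertNth 1 t v ∈ trapezoid lo hi κ} =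
        {v | v 0 ∈ Icc 0 (κ - t)} :=
      ext fun v => ⟨fun hv => hv.2, fun hv => ⟨⟨ht.1.le, ht.2.le⟩, hv⟩⟩
    rw [this, volume_setOf_mem_Icc_fin_one, sub_zero]

theorem volume_shearedPrism {β lo hi κ : ℝ} (hβ : 0 ≤ β) (hlo : lo ≤ hi) (hκ : hi ≤ κ) :
    volume (shearedPrism β lo hi κ) =
      ENNReal.ofReal (β * ((hi - lo) * (κ - (lo + hi) / 2))) := by
  have harea : 0 ≤ (hi - lo) * (κ - (lo + hi) / 2) :=
    mul_nonneg (by linarith) (by linarith)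
  rw [volume_eq_ofReal_integral_of_volume_slice (measurableSet_shearedPrism β lo hi κ) 0 hβ
    (fun z hz => hz.1) intervalIntegrable_const (fun _ _ => harea) fun b hb => ?_]
  · rw [intervalIntegral.integral_const, smul_eq_mul, sub_zero]
  · have : {w : Fin 2 → ℝ | Fin.insertNth 0 b w ∈ shearedPrism β lo hi κ} =
        trapezoid (lo - b) (hi - b) (κ - b) :=
      ext fun w => ⟨fun hw => hw.2, fun hw => ⟨⟨hb.1.le, hb.2.le⟩, hw⟩⟩
    rw [this, volume_trapezoid (by linarith) (by linarith)]
    congr 1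
    ring

/- Sections at `x 0 = a`, in the coordinates `y = (b, c, d, e)`; the prism holds `(b, d, e)`.
The half-open ranges here and in `cell2` make the three cells disjoint. -/
def lowerSlab (a : ℝ) : Set (Fin 4 → ℝ) :=
  {y | y 1 ∈ Ico (1 / 4 - a / 2) (1 / 3 - a) ∧
    ![y 0, y 2, y 3] ∈
      shearedPrism (1 / 2 - a - y 1) (1 - 2 * a - 2 * y 1) (1 / 2 - a) (1 - a - y 1)}

def upperSlab (a c₀ : ℝ) : Set (Fin 4 → ℝ) :=
  {y | y 1 ∈ Icc c₀ (1 / 2 - a) ∧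
    ![y 0, y 2, y 3] ∈
      shearedPrism (1 / 2 - a - y 1) ((1 - a - y 1) / 2) (1 / 2 - a) (1 - a - y 1)}

theorem measurableSet_lowerSlab (a : ℝ) : MeasurableSet (lowerSlab a) := by
  rw [lowerSlab, measurableSet_setOfPred]
  simp only [shearedPrism, mem_ofPred_eq, mem_Ico, Matrix.cons_val]
  fun_prop

theorem measurableSet_upperSlab (a c₀ : ℝ) : MeasurableSet (upperSlab a c₀) := by
  rw [upperSlab, measurableSet_setOfPred]
  simp only [shearedPrism, mem_ofPred_eq, mem_Icc, Matrix.cons_val]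
  fun_prop

theorem volume_lowerSlab {a : ℝ} (ha₀ : 0 ≤ a) (ha₁ : a ≤ 1 / 6) :
    volume (lowerSlab a) = ENNReal.ofReal (∫ c in (1 / 4 - a / 2)..(1 / 3 - a),
      (1 / 2 - a - c) * ((a + 2 * c - 1 / 2) * (1 / 4 + a / 2))) := by
  refine volume_eq_ofReal_integral_of_volume_slice (measurableSet_lowerSlab a) 1 (by linarith)
    (fun y hy => Ico_subset_Icc_self hy.1) ((by fun_prop : Continuous _).intervalIntegrable _ _)
    (fun c hc => mul_nonneg (by linarith [hc.2]) (mul_nonneg (by linarith [hc.1]) (by linarith)))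
    fun c hc => ?_
  have : {z : Fin 3 → ℝ | Fin.insertNth 1 c z ∈ lowerSlab a} =
      shearedPrism (1 / 2 - a - c) (1 - 2 * a - 2 * c) (1 / 2 - a) (1 - a - c) :=
    ext fun z => ⟨fun hz => hz.2, fun hz => ⟨⟨hc.1.le, hc.2⟩, hz⟩⟩
  rw [this, volume_shearedPrism (by linarith [hc.2]) (by linarith [hc.1]) (by linarith [hc.2])]
  congr 1
  ring

theorem volume_upperSlab {a c₀ : ℝ} (ha : 0 ≤ a) (hc₀ : a ≤ c₀) (hc₀' : c₀ ≤ 1 / 2 - a) :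
    volume (upperSlab a c₀) = ENNReal.ofReal (∫ c in c₀..(1 / 2 - a),
      (1 / 2 - a - c) * ((c - a) / 2 * ((2 - a - 3 * c) / 4))) := by
  refine volume_eq_ofReal_integral_of_volume_slice (measurableSet_upperSlab a c₀) 1 hc₀'
    (fun y hy => hy.1) ((by fun_prop : Continuous _).intervalIntegrable _ _)
    (fun c hc => mul_nonneg (by linarith [hc.2])
      (mul_nonneg (by linarith [hc.1]) (by linarith [hc.2])))
    fun c hc => ?_
  have : {z : Fin 3 → ℝ | Fin.insertNth 1 c z ∈ upperSlab a c₀} =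
      shearedPrism (1 / 2 - a - c) ((1 - a - c) / 2) (1 / 2 - a) (1 - a - c) :=
    ext fun z => ⟨fun hz => hz.2, fun hz => ⟨⟨hc.1.le, hc.2.le⟩, hz⟩⟩
  rw [this, volume_shearedPrism (by linarith [hc.2]) (by linarith [hc.1]) (by linarith [hc.2])]
  congr 1
  ring

def cell0 : Set (Fin 5 → ℝ) := {x | x 0 ∈ Icc 0 (1 / 6) ∧ Fin.tail x ∈ lowerSlab (x 0)}

def cell1 : Set (Fin 5 → ℝ) :=
  {x | x 0 ∈ Icc 0 (1 / 6) ∧ Fin.tail x ∈ upperSlab (x 0) (1 / 3 - x 0)}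

def cell2 : Set (Fin 5 → ℝ) := {x | x 0 ∈ Ioc (1 / 6) (1 / 4) ∧ Fin.tail x ∈ upperSlab (x 0) (x 0)}

theorem measurableSet_cell0 : MeasurableSet cell0 := by
  rw [cell0, measurableSet_setOfPred]
  simp only [lowerSlab, shearedPrism, mem_ofPred_eq, mem_Icc, mem_Ico, Fin.tail, Matrix.cons_val]
  fun_prop

theorem measurableSet_cell1 : MeasurableSet cell1 := by
  rw [cell1, measurableSet_setOfPred]
  simp only [upperSlab, shearedPrism, mem_ofPred_eq, mem_Icc, Fin.tail, Matrix.cons_val]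
  fun_prop

theorem measurableSet_cell2 : MeasurableSet cell2 := by
  rw [cell2, measurableSet_setOfPred]
  simp only [upperSlab, shearedPrism, mem_ofPred_eq, mem_Icc, mem_Ioc, Fin.tail, Matrix.cons_val]
  fun_prop

theorem volume_cell0 : volume cell0 = ENNReal.ofReal (73 / 3732480) := by
  have hslice : ∀ a ∈ Ioo (0 : ℝ) (1 / 6),
      volume {y : Fin 4 → ℝ | Fin.insertNth 0 a y ∈ cell0} = volume (lowerSlab a) :=
    fun a ha => congrArg volume (ext fun y => ⟨And.right, fun hy => ⟨Ioo_subset_Icc_self ha, hy⟩⟩)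
  have hV : ∀ a : ℝ, ∫ c in (1 / 4 - a / 2)..(1 / 3 - a),
      (1 / 2 - a - c) * ((a + 2 * c - 1 / 2) * (1 / 4 + a / 2)) =
      7 / 20736 - 19 / 5184 * a + 1 / 144 * a ^ 2 + 1 / 48 * a ^ 3 - 1 / 48 * a ^ 4 := fun a => by
    rw [integral_eq_of_quartic (-(1 / 4 + a / 2) * (1 / 2 - a) ^ 2)
      (3 * (1 / 4 + a / 2) * (1 / 2 - a)) (-2 * (1 / 4 + a / 2)) 0 0 fun c => by ring]
    ring
  rw [volume_eq_ofReal_integral_of_volume_slice measurableSet_cell0 0 (by norm_num)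
    (fun x hx => hx.1) ?_ ?_ fun a ha => (hslice a ha).trans (volume_lowerSlab ha.1.le ha.2.le)]
  · simp_rw [hV]
    rw [integral_eq_of_quartic (7 / 20736) (-19 / 5184) (1 / 144) (1 / 48) (-1 / 48)
      fun a => by ring]
    norm_num
  · simp_rw [hV]
    exact (by fun_prop : Continuous _).intervalIntegrable _ _
  · intro a ha
    exact intervalIntegral.integral_nonneg (by linarith [ha.2]) fun c hc =>
      mul_nonneg (by linarith [hc.2]) (mul_nonneg (by linarith [hc.1]) (by linarith [ha.1]))

theorem volume_cell1 : volume cell1 = ENNReal.ofReal (5 / 82944) := by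
  have hslice : ∀ a ∈ Ioo (0 : ℝ) (1 / 6),
      volume {y : Fin 4 → ℝ | Fin.insertNth 0 a y ∈ cell1} = volume (upperSlab a (1 / 3 - a)) :=
    fun a ha => congrArg volume (ext fun y => ⟨And.right, fun hy => ⟨Ioo_subset_Icc_self ha, hy⟩⟩)
  have hV : ∀ a : ℝ, ∫ c in (1 / 3 - a)..(1 / 2 - a),
      (1 / 2 - a - c) * ((c - a) / 2 * ((2 - a - 3 * c) / 4)) =
      23 / 41472 - 1 / 648 * a - 1 / 144 * a ^ 2 := fun a => by
    rw [integral_eq_of_quartic (-(1 / 2 - a) * a * (2 - a) / 8)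
      (((2 - a) / 2 + 3 * (1 / 2 - a) * a) / 8) (-(2 - a + 3 / 2) / 8) (3 / 8) 0
      fun c => by ring]
    ring
  rw [volume_eq_ofReal_integral_of_volume_slice measurableSet_cell1 0 (by norm_num)
    (fun x hx => hx.1) ?_ ?_ fun a ha =>
      (hslice a ha).trans (volume_upperSlab ha.1.le (by linarith [ha.2]) (by linarith))]
  · simp_rw [hV]
    rw [integral_eq_of_quartic (23 / 41472) (-1 / 648) (-1 / 144) 0 0 fun a => by ring]
    norm_num
  · simp_rw [hV]
    exact (by fun_prop : Continuous _).intervalIntegrable _ _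
  · intro a ha
    exact intervalIntegral.integral_nonneg (by linarith) fun c hc =>
      mul_nonneg (by linarith [hc.2])
        (mul_nonneg (by linarith [hc.1, ha.2]) (by linarith [hc.2, ha.1]))

theorem volume_cell2 : volume cell2 = ENNReal.ofReal (1 / 466560) := by
  have hslice : ∀ a ∈ Ioo (1 / 6 : ℝ) (1 / 4),
      volume {y : Fin 4 → ℝ | Fin.insertNth 0 a y ∈ cell2} = volume (upperSlab a a) :=
    fun a ha => congrArg volume (ext fun y => ⟨And.right, fun hy => ⟨Ioo_subset_Ioc_self ha, hy⟩⟩)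
  have hV : ∀ a : ℝ, ∫ c in a..(1 / 2 - a),
      (1 / 2 - a - c) * ((c - a) / 2 * ((2 - a - 3 * c) / 4)) =
      5 / 1536 - 1 / 24 * a + 3 / 16 * a ^ 2 - 1 / 3 * a ^ 3 + 1 / 6 * a ^ 4 := fun a => by
    rw [integral_eq_of_quartic (-(1 / 2 - a) * a * (2 - a) / 8)
      (((2 - a) / 2 + 3 * (1 / 2 - a) * a) / 8) (-(2 - a + 3 / 2) / 8) (3 / 8) 0
      fun c => by ring]
    ring
  rw [volume_eq_ofReal_integral_of_volume_slice measurableSet_cell2 0 (by norm_num)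
    (fun x hx => Ioc_subset_Icc_self hx.1) ?_ ?_ fun a ha =>
      (hslice a ha).trans (volume_upperSlab (by linarith [ha.1]) le_rfl (by linarith [ha.2]))]
  · simp_rw [hV]
    rw [integral_eq_of_quartic (5 / 1536) (-1 / 24) (3 / 16) (-1 / 3) (1 / 6) fun a => by ring]
    norm_num
  · simp_rw [hV]
    exact (by fun_prop : Continuous _).intervalIntegrable _ _
  · intro a ha
    exact intervalIntegral.integral_nonneg (by linarith [ha.2]) fun c hc =>
      mul_nonneg (by linarith [hc.2])
        (mul_nonneg (by linarith [hc.1]) (by linarith [hc.2, ha.1]))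

def antipluralityBordaSet : Set (Fin 5 → ℝ) :=
  {x | (∀ i, 0 ≤ x i) ∧ x 0 + x 1 + x 2 + x 3 + x 4 ≤ 1 ∧
      1 ≤ x 0 + 2 * x 1 + x 2 + 2 * x 4 ∧ 1 ≤ 2 * x 0 + x 1 + 2 * x 2 + x 4 ∧
      2 * (x 0 + x 1 + x 4) ≤ 1 ∧ 2 * (x 0 + x 1 + x 2) ≤ 1}

theorem antipluralityBordaSet_eq_union : antipluralityBordaSet = cell0 ∪ cell1 ∪ cell2 := by
  ext x
  simp only [antipluralityBordaSet, cell0, cell1, cell2, lowerSlab, upperSlab, shearedPrism,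
    Fin.tail, Fin.forall_fin_succ, IsEmpty.forall_iff, and_true, Fin.succ_zero_eq_one,
    Fin.succ_one_eq_two, Fin.reduceSucc, Matrix.cons_val, mem_ofPred_eq, mem_union, mem_Icc,
    mem_Ico, mem_Ioc]
  constructor
  · rintro ⟨⟨h₀, h₁, h₂, h₃, h₄⟩, hsum, hA, hB, hC, hD⟩
    rcases le_or_gt (x 0) (1 / 6) with ha | ha
    · rcases lt_or_ge (x 2) (1 / 3 - x 0) with hc | hc
      · refine Or.inl (Or.inl ⟨⟨?_, ?_⟩, ⟨?_, ?_⟩, ⟨?_, ?_⟩, ⟨?_, ?_⟩, ?_, ?_⟩) <;> linarith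
      · refine Or.inl (Or.inr ⟨⟨?_, ?_⟩, ⟨?_, ?_⟩, ⟨?_, ?_⟩, ⟨?_, ?_⟩, ?_, ?_⟩) <;> linarith
    · refine Or.inr ⟨⟨?_, ?_⟩, ⟨?_, ?_⟩, ⟨?_, ?_⟩, ⟨?_, ?_⟩, ?_, ?_⟩ <;> linarith
  · rintro ((h | h) | h) <;> obtain ⟨⟨_, _⟩, ⟨_, _⟩, ⟨_, _⟩, ⟨_, _⟩, _, _⟩ := h <;>
      refine ⟨⟨?_, ?_, ?_, ?_, ?_⟩, ?_, ?_, ?_, ?_, ?_⟩ <;> linarith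

theorem volume_antipluralityBordaSet :
    volume antipluralityBordaSet = ENNReal.ofReal (17 / 207360) := by
  have h₀₁ : Disjoint cell0 cell1 :=
    disjoint_left.2 fun x h₀ h₁ => (h₀.2.1.2.trans_le h₁.2.1.1).false
  have h₀₁₂ : Disjoint (cell0 ∪ cell1) cell2 :=
    disjoint_left.2 fun x h h₂ => (h.elim (·.1.2) (·.1.2) : x 0 ≤ 1 / 6).not_gt h₂.1.1
  rw [antipluralityBordaSet_eq_union, measure_union h₀₁₂ measurableSet_cell2,
    measure_union h₀₁ measurableSet_cell1, volume_cell0, volume_cell1, volume_cell2,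
    ← ENNReal.ofReal_add (by norm_num) (by norm_num),
    ← ENNReal.ofReal_add (by norm_num) (by norm_num)]
  norm_num

/-- The 5-dimensional Lebesgue volume of the set of voting situations in which
`a` is the antiplurality winner and also the Condorcet loser equals `17/207360`;
that is, the limiting probability of Borda's paradox for the antiplurality rule
under IAC for 3 candidates is `3·120·(17/207360) = 17/576`. -/
theorem borda_paradox_antiplurality :
    volume {x : Fin 5 → ℝ |
      (∀ i, 0 ≤ x i) ∧ x 0 + x 1 + x 2 + x 3 + x 4 ≤ 1 ∧
      1 ≤ x 0 + 2 * x 1 + x 2 + 2 * x 4 ∧ 1 ≤ 2 * x 0 + x 1 + 2 * x 2 + x 4 ∧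
      2 * (x 0 + x 1 + x 4) ≤ 1 ∧ 2 * (x 0 + x 1 + x 2) ≤ 1} = 17 / 207360 ∧
    3 * 120 * volume {x : Fin 5 → ℝ |
      (∀ i, 0 ≤ x i) ∧ x 0 + x 1 + x 2 + x 3 + x 4 ≤ 1 ∧
      1 ≤ x 0 + 2 * x 1 + x 2 + 2 * x 4 ∧ 1 ≤ 2 * x 0 + x 1 + 2 * x 2 + x 4 ∧
      2 * (x 0 + x 1 + x 4) ≤ 1 ∧ 2 * (x 0 + x 1 + x 2) ≤ 1} = 17 / 576 := by
  change volume antipluralityBordaSet = _ ∧ 3 * 120 * volume antipluralityBordaSet = _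
  rw [volume_antipluralityBordaSet, ← ENNReal.ofReal_ofNat 3, ← ENNReal.ofReal_ofNat 120,
    ← ENNReal.ofReal_mul (by norm_num), ← ENNReal.ofReal_mul (by norm_num)]
  norm_num [ENNReal.ofReal_div_of_pos]
end
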